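/- (Theorem 2.1, part 1, multiplicity) Under the stated assumptions, the algebraic multiplicity of λ = 1 as a root of the characteristic polynomial of T = M̂_D⁻¹ K is exactly n − m. -/

import Mathlib

/-!
Writing `u = x - 1` and `g = x² - x - 1`, the matrix `x M̂_D - K` is block tridiagonal with
diagonal blocks `u A`, `x S₁`, `x Ŝ₂`. Eliminating the first two blocks, the successive Schur
complements are `(g / u) S₁` (because `B A⁻¹ Bᵀ = S₁`) and `g⁻¹ (x g Ŝ₂ - u S₂)` (because
`C S₁⁻¹ Cᵀ = S₂`), so that for all but finitely many `x`
  `det M̂_D · χ_T(x) = det (x M̂_D - K) = u^(n-m) g^(m-p) det A det S₁ det (x g Ŝ₂ - u S₂)`.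
This is therefore an identity of polynomials, and at `x = 1` the cofactor of `u^(n-m)` is
`± det A det S₁ det Ŝ₂ ≠ 0`.
-/

open Matrix Polynomial

namespace Matrix

theorem vecMul_injective_of_rank_eq_card {K m n : Type*} [Field K] [Fintype m] [Fintype n]
    {M : Matrix m n K} (h : M.rank = Fintype.card m) : Function.Injective M.vecMul := by
  rw [vecMul_injective_iff, linearIndependent_iff_card_eq_finrank_span, Set.finrank,
    ← rank_eq_finrank_span_row, h]

variable {α l m p : Type*}

theorem fromBlocks_fromBlocks_submatrix_sumAssoc [Zero α] (P : Matrix l l α) (Q : Matrix l m α)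
    (R : Matrix m l α) (S : Matrix m m α) (E : Matrix m p α) (G : Matrix p m α)
    (H : Matrix p p α) :
    (fromBlocks (fromBlocks P Q R S) (fromRows 0 E) (fromCols 0 G) H).submatrix
        (Equiv.sumAssoc l m p).symm (Equiv.sumAssoc l m p).symm =
      fromBlocks P (fromCols Q 0) (fromRows R 0) (fromBlocks S E G H) := by
  ext (i | i | i) (j | j | j) <;> rfl

variable [CommRing α] [Fintype l] [Fintype m] [Fintype p]
  [DecidableEq l] [DecidableEq m] [DecidableEq p]

theorem det_fromBlocks_tridiagonal (P : Matrix l l α) (Q : Matrix l m α)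
    (R : Matrix m l α) (S : Matrix m m α) (E : Matrix m p α) (G : Matrix p m α)
    (H : Matrix p p α) (hP : IsUnit P.det) (hS : IsUnit (S - R * P⁻¹ * Q).det) :
    (fromBlocks (fromBlocks P Q R S) (fromRows 0 E) (fromCols 0 G) H).det =
      P.det * (S - R * P⁻¹ * Q).det * (H - G * (S - R * P⁻¹ * Q)⁻¹ * E).det := by
  let _ := invertibleOfIsUnitDet P hP
  let _ := invertibleOfIsUnitDet _ hS
  rw [← det_submatrix_equiv_self (Equiv.sumAssoc l m p).symm,
    fromBlocks_fromBlocks_submatrix_sumAssoc, det_fromBlocks₁₁, mul_assoc]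
  congr 1
  have hcorner : fromRows R (0 : Matrix p l α) * ⅟P * fromCols Q (0 : Matrix l p α) =
      fromBlocks (R * P⁻¹ * Q) 0 0 0 := by
    rw [invOf_eq_nonsing_inv, fromRows_mul, fromRows_mul_fromCols]
    simp
  rw [hcorner, sub_eq_add_neg, fromBlocks_neg, fromBlocks_add]
  simp only [neg_zero, add_zero, ← sub_eq_add_neg]
  rw [det_fromBlocks₁₁, invOf_eq_nonsing_inv]

theorem det_mul_eval_charpoly_inv_mul {M : Matrix l l α} (hM : IsUnit M.det) (N : Matrix l l α)
    (x : α) : M.det * (M⁻¹ * N).charpoly.eval x = (x • M - N).det := by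
  rw [eval_charpoly, ← det_mul, mul_sub, mul_nonsing_inv_cancel_left _ _ hM, scalar_apply,
    ← smul_eq_mul_diagonal]

end Matrix

namespace Polynomial

variable {R : Type*} [CommRing R]

theorem eval_det_smul_map_C_sub_smul_map_C {n : Type*} [Fintype n] [DecidableEq n]
    (a b : R[X]) (M N : Matrix n n R) (x : R) :
    (a • M.map C - b • N.map C).det.eval x = (a.eval x • M - b.eval x • N).det := by
  rw [← coe_evalRingHom, RingHom.map_det]
  congr 1
  ext i j
  simp

variable [IsDomain R]

theorem eq_of_eval_eq_of_eval_ne_zero [Infinite R] {f g q : R[X]} (hq : q ≠ 0)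
    (h : ∀ x, q.eval x ≠ 0 → f.eval x = g.eval x) : f = g :=
  eq_of_infinite_eval_eq f g <| (finite_setOfPred_isRoot hq).infinite_compl.mono h

theorem rootMultiplicity_eq_of_C_mul_eq {f r : R[X]} {a c : R} {k : ℕ} (hr : ¬r.IsRoot a)
    (h : C c * f = (X - C a) ^ k * r) : f.rootMultiplicity a = k := by
  have hr₀ : r ≠ 0 := by rintro rfl; exact hr (by simp)
  have hne : (X - C a) ^ k * r ≠ 0 := mul_ne_zero (pow_ne_zero _ (X_sub_C_ne_zero a)) hr₀
  have := congrArg (rootMultiplicity a) h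
  rwa [rootMultiplicity_mul (h ▸ hne), rootMultiplicity_mul hne, rootMultiplicity_C,
    rootMultiplicity_X_sub_C_pow, rootMultiplicity_eq_zero hr, zero_add, add_zero] at this

end Polynomial

section SaddlePoint

variable {F l m p : Type*} [Field F]

def saddleMatrix (A : Matrix l l F) (B : Matrix m l F) (C : Matrix p m F) :
    Matrix ((l ⊕ m) ⊕ p) ((l ⊕ m) ⊕ p) F :=
  fromBlocks (fromBlocks A Bᵀ B 0) (fromRows 0 Cᵀ) (fromCols 0 C) 0

def saddlePreconditioner (A : Matrix l l F) (S₁ : Matrix m m F) (Ŝ : Matrix p p F) :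
    Matrix ((l ⊕ m) ⊕ p) ((l ⊕ m) ⊕ p) F :=
  fromBlocks (fromBlocks A 0 0 S₁) 0 0 Ŝ

theorem smul_saddlePreconditioner_sub_saddleMatrix (x : F) (A : Matrix l l F) (B : Matrix m l F)
    (C : Matrix p m F) (S₁ : Matrix m m F) (Ŝ : Matrix p p F) :
    x • saddlePreconditioner A S₁ Ŝ - saddleMatrix A B C =
      fromBlocks (fromBlocks ((x - 1) • A) (-Bᵀ) (-B) (x • S₁)) (fromRows 0 (-Cᵀ))
        (fromCols 0 (-C)) (x • Ŝ) := by
  ext ((i | i) | i) ((j | j) | j) <;> simp [saddlePreconditioner, saddleMatrix, sub_smul]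

variable [Fintype l] [Fintype m] [Fintype p] [DecidableEq l] [DecidableEq m] [DecidableEq p]

noncomputable def saddleCofactor (A : Matrix l l F) (S₁ : Matrix m m F) (Ŝ S₂ : Matrix p p F) :
    F[X] :=
  C (A.det * S₁.det) * (X ^ 2 - X - 1 : F[X]) ^ (Fintype.card m - Fintype.card p) *
    ((X * (X ^ 2 - X - 1) : F[X]) • Ŝ.map C - (X - 1 : F[X]) • S₂.map C).det

theorem det_saddlePreconditioner (A : Matrix l l F) (S₁ : Matrix m m F) (Ŝ : Matrix p p F) :
    (saddlePreconditioner A S₁ Ŝ).det = A.det * S₁.det * Ŝ.det := by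
  rw [saddlePreconditioner, det_fromBlocks_zero₂₁, det_fromBlocks_zero₂₁]

theorem eval_saddleCofactor (A : Matrix l l F) (S₁ : Matrix m m F) (Ŝ S₂ : Matrix p p F) (x : F) :
    (saddleCofactor A S₁ Ŝ S₂).eval x = A.det * S₁.det *
      (x ^ 2 - x - 1) ^ (Fintype.card m - Fintype.card p) *
        ((x * (x ^ 2 - x - 1)) • Ŝ - (x - 1) • S₂).det := by
  simp [saddleCofactor, eval_det_smul_map_C_sub_smul_map_C]

theorem eval_one_saddleCofactor_ne_zero {A : Matrix l l F} (hA : A.det ≠ 0) {S₁ : Matrix m m F}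
    (hS₁ : S₁.det ≠ 0) {Ŝ : Matrix p p F} (hŜ : Ŝ.det ≠ 0) (S₂ : Matrix p p F) :
    (saddleCofactor A S₁ Ŝ S₂).eval 1 ≠ 0 := by
  simp [eval_saddleCofactor, det_neg, hA, hS₁, hŜ]

theorem det_smul_saddlePreconditioner_sub_saddleMatrix {A : Matrix l l F} (hA : A.det ≠ 0)
    (B : Matrix m l F) (C : Matrix p m F) {S₁ : Matrix m m F} (hS₁ : S₁.det ≠ 0)
    (hS₁B : S₁ = B * A⁻¹ * Bᵀ) (Ŝ S₂ : Matrix p p F) (hS₂ : S₂ = C * S₁⁻¹ * Cᵀ) {x : F}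
    (hx₁ : x - 1 ≠ 0) (hg : x ^ 2 - x - 1 ≠ 0) (hml : Fintype.card m ≤ Fintype.card l)
    (hpm : Fintype.card p ≤ Fintype.card m) :
    (x • saddlePreconditioner A S₁ Ŝ - saddleMatrix A B C).det =
      (x - 1) ^ (Fintype.card l - Fintype.card m) * (saddleCofactor A S₁ Ŝ S₂).eval x := by
  rw [eval_saddleCofactor]
  set g := x ^ 2 - x - 1
  set c := g / (x - 1) with hc
  have hc₀ : c ≠ 0 := div_ne_zero hg hx₁
  have hxA : IsUnit ((x - 1) • A).det := by
    rw [det_smul]; exact (hx₁.isUnit.pow _).mul hA.isUnit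
  have hcS₁ : IsUnit (c • S₁).det := by
    rw [det_smul]; exact (hc₀.isUnit.pow _).mul hS₁.isUnit
  have hschur₁ : x • S₁ - -B * ((x - 1) • A)⁻¹ * -Bᵀ = c • S₁ := by
    let _ := invertibleOfNonzero hx₁
    have hBAB : -B * ((x - 1) • A)⁻¹ * -Bᵀ = (x - 1)⁻¹ • S₁ := by
      rw [Matrix.inv_smul A _ hA.isUnit, invOf_eq_inv, hS₁B]
      simp [Matrix.mul_smul, Matrix.smul_mul, Matrix.mul_assoc]
    rw [hBAB, ← sub_smul, hc]
    congr 1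
    field_simp
    ring
  have hschur₂ : x • Ŝ - -C * (c • S₁)⁻¹ * -Cᵀ = g⁻¹ • ((x * g) • Ŝ - (x - 1) • S₂) := by
    let _ := invertibleOfNonzero hc₀
    have hCSC : -C * (c • S₁)⁻¹ * -Cᵀ = c⁻¹ • S₂ := by
      rw [Matrix.inv_smul S₁ _ hS₁.isUnit, invOf_eq_inv, hS₂]
      simp [Matrix.mul_smul, Matrix.smul_mul, Matrix.mul_assoc]
    rw [hCSC, smul_sub, smul_smul, smul_smul, hc]
    congr 2 <;> field_simp
  rw [smul_saddlePreconditioner_sub_saddleMatrix, det_fromBlocks_tridiagonal _ _ _ _ _ _ _ hxA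
    (by rwa [hschur₁]), hschur₁, hschur₂, det_smul, det_smul, det_smul, hc]
  obtain ⟨k, hk⟩ := Nat.exists_eq_add_of_le hml
  obtain ⟨j, hj⟩ := Nat.exists_eq_add_of_le hpm
  rw [hk, hj, Nat.add_sub_cancel_left, Nat.add_sub_cancel_left]
  simp only [div_pow, inv_pow, pow_add]
  field_simp

theorem C_det_saddlePreconditioner_mul_charpoly [Infinite F] {A : Matrix l l F} (hA : A.det ≠ 0)
    (B : Matrix m l F) (C : Matrix p m F) {S₁ : Matrix m m F} (hS₁ : S₁.det ≠ 0)
    (hS₁B : S₁ = B * A⁻¹ * Bᵀ) {Ŝ : Matrix p p F} (hŜ : Ŝ.det ≠ 0) (S₂ : Matrix p p F)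
    (hS₂ : S₂ = C * S₁⁻¹ * Cᵀ) (hml : Fintype.card m ≤ Fintype.card l)
    (hpm : Fintype.card p ≤ Fintype.card m) :
    Polynomial.C (saddlePreconditioner A S₁ Ŝ).det *
        ((saddlePreconditioner A S₁ Ŝ)⁻¹ * saddleMatrix A B C).charpoly =
      (X - Polynomial.C 1) ^ (Fintype.card l - Fintype.card m) * saddleCofactor A S₁ Ŝ S₂ := by
  have hMD : IsUnit (saddlePreconditioner A S₁ Ŝ).det := by
    rw [det_saddlePreconditioner]; exact (mul_ne_zero (mul_ne_zero hA hS₁) hŜ).isUnit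
  have hq : (X - 1) * (X ^ 2 - X - 1 : F[X]) ≠ 0 := by
    refine mul_ne_zero (by simpa using X_sub_C_ne_zero (1 : F)) fun h => ?_
    simpa using congrArg (eval 0) h
  refine eq_of_eval_eq_of_eval_ne_zero hq fun x hx => ?_
  simp only [eval_mul, eval_sub, eval_pow, eval_X, eval_one, eval_C, mul_ne_zero_iff] at hx ⊢
  rw [det_mul_eval_charpoly_inv_mul hMD, det_smul_saddlePreconditioner_sub_saddleMatrix hA B C hS₁
    hS₁B Ŝ S₂ hS₂ hx.1 hx.2 hml hpm]

end SaddlePoint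

theorem stmt_5_general (n m p : ℕ) (hnm : m ≤ n) (hmp : p ≤ m)
    (A : Matrix (Fin n) (Fin n) ℝ) (hA : A.PosDef)
    (B : Matrix (Fin m) (Fin n) ℝ) (hB : B.rank = m)
    (C : Matrix (Fin p) (Fin m) ℝ)
    (hatS₂ : Matrix (Fin p) (Fin p) ℝ) (hhatS₂ : hatS₂.PosDef)
    (S₁ : Matrix (Fin m) (Fin m) ℝ) (hS₁def : S₁ = B * A⁻¹ * Bᵀ)
    (S₂ : Matrix (Fin p) (Fin p) ℝ) (hS₂def : S₂ = C * S₁⁻¹ * Cᵀ)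
    (K MD T : Matrix ((Fin n ⊕ Fin m) ⊕ Fin p) ((Fin n ⊕ Fin m) ⊕ Fin p) ℝ)
    (hK : K = fromBlocks (fromBlocks A Bᵀ B 0) (fromRows 0 Cᵀ) (fromCols 0 C) 0)
    (hMD : MD = fromBlocks (fromBlocks A 0 0 S₁) 0 0 hatS₂)
    (hT : T = MD⁻¹ * K) :
    T.charpoly.rootMultiplicity 1 = n - m := by
  have hS₁ : S₁.PosDef := by
    have := hA.inv.mul_mul_conjTranspose_same
      (vecMul_injective_of_rank_eq_card (hB.trans (Fintype.card_fin m).symm))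
    rwa [conjTranspose_eq_transpose_of_trivial, ← hS₁def] at this
  have hfactor := C_det_saddlePreconditioner_mul_charpoly hA.det_pos.ne' B C hS₁.det_pos.ne'
    hS₁def hhatS₂.det_pos.ne' S₂ hS₂def (by simpa using hnm) (by simpa using hmp)
  subst hT hK hMD
  simp only [Fintype.card_fin] at hfactor
  exact rootMultiplicity_eq_of_C_mul_eq (eval_one_saddleCofactor_ne_zero hA.det_pos.ne'
    hS₁.det_pos.ne' hhatS₂.det_pos.ne' S₂) hfactor

/-- Theorem 2.1, part 1, multiplicity: the algebraic multiplicity of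
`λ = 1` as a root of the characteristic polynomial of `T = M̂_D⁻¹ K` is exactly
`n − m`. -/
theorem stmt_5 (n m p : ℕ) (hnm : m ≤ n) (hmp : p ≤ m)
    (A : Matrix (Fin n) (Fin n) ℝ) (hA : A.PosDef)
    (B : Matrix (Fin m) (Fin n) ℝ) (hB : B.rank = m)
    (C : Matrix (Fin p) (Fin m) ℝ) (hC : C.rank = p)
    (hatS₂ : Matrix (Fin p) (Fin p) ℝ) (hhatS₂ : hatS₂.PosDef)
    (S₁ : Matrix (Fin m) (Fin m) ℝ) (hS₁def : S₁ = B * A⁻¹ * Bᵀ)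
    (S₂ : Matrix (Fin p) (Fin p) ℝ) (hS₂def : S₂ = C * S₁⁻¹ * Cᵀ)
    (K MD T : Matrix ((Fin n ⊕ Fin m) ⊕ Fin p) ((Fin n ⊕ Fin m) ⊕ Fin p) ℝ)
    (hK : K = fromBlocks (fromBlocks A Bᵀ B 0) (fromRows 0 Cᵀ) (fromCols 0 C) 0)
    (hMD : MD = fromBlocks (fromBlocks A 0 0 S₁) 0 0 hatS₂)
    (hT : T = MD⁻¹ * K) :
    T.charpoly.rootMultiplicity 1 = n - m :=
  stmt_5_general n m p hnm hmp A hA B hB C hatS₂ hhatS₂ S₁ hS₁def S₂ hS₂def K MD T hK hMD hT
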